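/- (Change of occupancy measure for total-variation errors.) Let S be a finite state space, 𝒜 a finite action set, H ∈ ℕ, and d₀ an initial distribution on S. Let P and P̂ be two transition models and define r_h(s,a) := ‖P_h(·|s,a) − P̂_h(·|s,a)‖_TV (so 0 ≤ r_h(s,a) ≤ 2). Then for every policy π: Σ_{h=0}^{H−1} Σ_{(s,a)} d^π_{P;h}(s,a) · r_h(s,a) ≤ (2H+1) · Σ_{h=0}^{H−1} Σ_{(s,a)} d^π_{P̂;h}(s,a) · r_h(s,a). -/

import Mathlib

noncomputable section

open Finset

/-- `p` is a probability distribution on the finite type `X`. -/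
def IsDist {X : Type*} [Fintype X] (p : X → ℝ) : Prop :=
  (∀ x, 0 ≤ p x) ∧ (∑ x, p x) = 1

variable {S Act : Type*} [Fintype S] [Fintype Act]

/-- Occupancy measure `d^π_{P;h}(s,a)`: the probability that, executing the policy `π`
in the transition model `P` starting from `d0`, the state-action pair at step `h`
is `(s,a)`. -/
def occ (d0 : S → ℝ) (π : ℕ → S → Act → ℝ) (P : ℕ → S → Act → S → ℝ) :
    ℕ → S → Act → ℝ
  | 0 => fun s a => d0 s * π 0 s a
  | h + 1 => fun s' a' => (∑ s, ∑ a, occ d0 π P h s a * P h s a s') * π (h + 1) s' a'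

/-! The occupancy measures of `P` and `P̂` drift apart by at most the expected model error
accumulated so far: pushing two distributions through two kernels costs their TV distance plus
the expected TV distance of the kernels, and a common policy step costs nothing. Hence
`‖d^π_{P;h} − d^π_{P̂;h}‖_TV ≤ Σ_{g<h} E_g`, where `E_g := E_{d^π_{P̂;g}}[r_g]`, and since
`0 ≤ r_h ≤ 2`, `E_{d^π_{P;h}}[r_h] ≤ E_h + 2 Σ_{g<h} E_g`. Summing over `h < H` gives the factor
`2H + 1`. -/

section TVDist

variable {X Y : Type*} [Fintype X] [Fintype Y]

/-- The paper's `‖p − q‖_TV`, without the factor `1/2`. -/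
def tvDist (p q : X → ℝ) : ℝ := ∑ x, |p x - q x|

def kernelBind (μ : X → ℝ) (K : X → Y → ℝ) (y : Y) : ℝ := ∑ x, μ x * K x y

theorem tvDist_nonneg (p q : X → ℝ) : 0 ≤ tvDist p q :=
  sum_nonneg fun _ _ => abs_nonneg _

theorem tvDist_le_two {p q : X → ℝ} (hp : IsDist p) (hq : IsDist q) : tvDist p q ≤ 2 :=
  calc tvDist p q ≤ ∑ x, (p x + q x) := by
        refine sum_le_sum fun x _ => (abs_sub _ _).trans_eq ?_
        rw [abs_of_nonneg (hp.1 x), abs_of_nonneg (hq.1 x)]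
    _ = 2 := by rw [sum_add_distrib, hp.2, hq.2]; norm_num

theorem sum_mul_le_sum_mul_add_tvDist {μ ν r : X → ℝ} {c : ℝ}
    (hr0 : ∀ x, 0 ≤ r x) (hrc : ∀ x, r x ≤ c) :
    ∑ x, μ x * r x ≤ ∑ x, ν x * r x + c * tvDist μ ν := by
  rw [tvDist, mul_sum, ← sub_le_iff_le_add', ← sum_sub_distrib]
  refine sum_le_sum fun x _ => ?_
  rw [← sub_mul, mul_comm c]
  exact mul_le_mul (le_abs_self _) (hrc x) (hr0 x) (abs_nonneg _)

theorem tvDist_compProd {μ ν : X → ℝ} {K : X → Y → ℝ} (hK : ∀ x, IsDist (K x)) :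
    tvDist (fun p : X × Y => μ p.1 * K p.1 p.2) (fun p => ν p.1 * K p.1 p.2) = tvDist μ ν := by
  rw [tvDist, Fintype.sum_prod_type]
  refine sum_congr rfl fun x _ => ?_
  simp_rw [← sub_mul, abs_mul, abs_of_nonneg ((hK x).1 _), ← mul_sum, (hK x).2, mul_one]

theorem abs_mul_sub_mul_le {μ ν k l : ℝ} (hν : 0 ≤ ν) (hk : 0 ≤ k) :
    |μ * k - ν * l| ≤ |μ - ν| * k + ν * |k - l| :=
  calc |μ * k - ν * l| = |(μ - ν) * k + ν * (k - l)| := by ring_nf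
    _ ≤ |μ - ν| * k + ν * |k - l| := by
      refine (abs_add_le _ _).trans_eq ?_
      rw [abs_mul, abs_mul, abs_of_nonneg hk, abs_of_nonneg hν]

theorem tvDist_bind_le {μ ν : X → ℝ} {K L : X → Y → ℝ} (hν : ∀ x, 0 ≤ ν x)
    (hK : ∀ x, IsDist (K x)) :
    tvDist (kernelBind μ K) (kernelBind ν L) ≤ tvDist μ ν + ∑ x, ν x * tvDist (K x) (L x) :=
  calc tvDist (kernelBind μ K) (kernelBind ν L)
      ≤ ∑ y, ∑ x, (|μ x - ν x| * K x y + ν x * |K x y - L x y|) := by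
        refine sum_le_sum fun y _ => ?_
        rw [kernelBind, kernelBind, ← sum_sub_distrib]
        exact (abs_sum_le_sum_abs _ _).trans
          (sum_le_sum fun x _ => abs_mul_sub_mul_le (hν x) ((hK x).1 y))
    _ = tvDist μ ν + ∑ x, ν x * tvDist (K x) (L x) := by
        rw [sum_comm, tvDist, ← sum_add_distrib]
        refine sum_congr rfl fun x _ => ?_
        rw [sum_add_distrib, ← mul_sum, ← mul_sum, (hK x).2, mul_one, tvDist]

end TVDist

theorem sum_range_sum_range_le {E : ℕ → ℝ} (hE : ∀ g, 0 ≤ E g) (H : ℕ) :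
    ∑ h ∈ range H, ∑ g ∈ range h, E g ≤ H * ∑ g ∈ range H, E g :=
  calc ∑ h ∈ range H, ∑ g ∈ range h, E g ≤ ∑ _h ∈ range H, ∑ g ∈ range H, E g :=
        sum_le_sum fun h hh => sum_le_sum_of_subset_of_nonneg
          (range_subset_range.2 (mem_range.1 hh).le) fun g _ _ => hE g
    _ = H * ∑ g ∈ range H, E g := by rw [sum_const, card_range, nsmul_eq_mul]

section Occupancy

variable (d0 : S → ℝ) (π : ℕ → S → Act → ℝ)

theorem occ_nonneg {P : ℕ → S → Act → S → ℝ} (hd0 : ∀ s, 0 ≤ d0 s)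
    (hπ : ∀ h s a, 0 ≤ π h s a) (hP : ∀ h s a s', 0 ≤ P h s a s') :
    ∀ h s a, 0 ≤ occ d0 π P h s a
  | 0, s, a => mul_nonneg (hd0 s) (hπ 0 s a)
  | h + 1, s', a' => mul_nonneg (sum_nonneg fun s _ => sum_nonneg fun a _ =>
      mul_nonneg (occ_nonneg hd0 hπ hP h s a) (hP h s a s')) (hπ (h + 1) s' a')

theorem uncurry_occ_succ (P : ℕ → S → Act → S → ℝ) (h : ℕ) :
    Function.uncurry (occ d0 π P (h + 1)) = fun p => kernelBind (Function.uncurry (occ d0 π P h))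
      (fun q => P h q.1 q.2) p.1 * π (h + 1) p.1 p.2 := by
  ext ⟨s', a'⟩
  simp only [Function.uncurry_apply_pair, occ, kernelBind, Fintype.sum_prod_type]

/-- `E_h`: the expected model error `r_h` under the occupancy measure of `P̂`. -/
def modelError (P Phat : ℕ → S → Act → S → ℝ) (h : ℕ) : ℝ :=
  ∑ s, ∑ a, occ d0 π Phat h s a * tvDist (P h s a) (Phat h s a)

variable {d0 π} {P Phat : ℕ → S → Act → S → ℝ}

theorem modelError_nonneg (hd0 : ∀ s, 0 ≤ d0 s) (hπ : ∀ h s a, 0 ≤ π h s a)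
    (hPhat : ∀ h s a s', 0 ≤ Phat h s a s') (h : ℕ) : 0 ≤ modelError d0 π P Phat h :=
  sum_nonneg fun s _ => sum_nonneg fun a _ =>
    mul_nonneg (occ_nonneg d0 π hd0 hπ hPhat h s a) (tvDist_nonneg _ _)

theorem tvDist_occ_succ_le (hd0 : ∀ s, 0 ≤ d0 s) (hπ : ∀ h s, IsDist (π h s))
    (hP : ∀ h s a, IsDist (P h s a)) (hPhat : ∀ h s a s', 0 ≤ Phat h s a s') (h : ℕ) :
    tvDist (Function.uncurry (occ d0 π P (h + 1))) (Function.uncurry (occ d0 π Phat (h + 1)))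
      ≤ tvDist (Function.uncurry (occ d0 π P h)) (Function.uncurry (occ d0 π Phat h))
        + modelError d0 π P Phat h := by
  rw [uncurry_occ_succ, uncurry_occ_succ, tvDist_compProd (hπ (h + 1)), modelError,
    ← Fintype.sum_prod_type']
  exact tvDist_bind_le (fun q => occ_nonneg d0 π hd0 (fun h s => (hπ h s).1) hPhat h q.1 q.2)
    fun q => hP h q.1 q.2

theorem tvDist_occ_le (hd0 : ∀ s, 0 ≤ d0 s) (hπ : ∀ h s, IsDist (π h s))
    (hP : ∀ h s a, IsDist (P h s a)) (hPhat : ∀ h s a s', 0 ≤ Phat h s a s') :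
    ∀ h, tvDist (Function.uncurry (occ d0 π P h)) (Function.uncurry (occ d0 π Phat h))
      ≤ ∑ g ∈ range h, modelError d0 π P Phat g
  | 0 => by simp [tvDist, occ]
  | h + 1 => by
    rw [sum_range_succ]
    exact (tvDist_occ_succ_le hd0 hπ hP hPhat h).trans
      (add_le_add_left (tvDist_occ_le hd0 hπ hP hPhat h) _)

theorem sum_occ_mul_tvDist_le (hd0 : ∀ s, 0 ≤ d0 s) (hπ : ∀ h s, IsDist (π h s))
    (hP : ∀ h s a, IsDist (P h s a)) (hPhat : ∀ h s a, IsDist (Phat h s a)) (h : ℕ) :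
    ∑ s, ∑ a, occ d0 π P h s a * tvDist (P h s a) (Phat h s a)
      ≤ modelError d0 π P Phat h + 2 * ∑ g ∈ range h, modelError d0 π P Phat g := by
  rw [modelError, ← Fintype.sum_prod_type', ← Fintype.sum_prod_type']
  calc _ ≤ _ := sum_mul_le_sum_mul_add_tvDist (ν := Function.uncurry (occ d0 π Phat h))
          (fun _ => tvDist_nonneg _ _) fun q => tvDist_le_two (hP h q.1 q.2) (hPhat h q.1 q.2)
    _ ≤ _ := add_le_add le_rfl (mul_le_mul_of_nonneg_left
          (tvDist_occ_le hd0 hπ hP (fun h s a => (hPhat h s a).1) h) zero_le_two)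

end Occupancy

/-- **Change of occupancy measure for total-variation errors.**
With `r_h(s,a) := ‖P_h(·|s,a) − P̂_h(·|s,a)‖_TV`, for every policy `π`:
`Σ_{h<H} E_{d^π_{P;h}}[r_h] ≤ (2H+1) · Σ_{h<H} E_{d^π_{P̂;h}}[r_h]`. -/
theorem tv_change_of_measure (H : ℕ)
    (d0 : S → ℝ) (hd0 : IsDist d0)
    (P Phat : ℕ → S → Act → S → ℝ)
    (hP : ∀ h s a, IsDist (P h s a)) (hPhat : ∀ h s a, IsDist (Phat h s a))
    (π : ℕ → S → Act → ℝ) (hπ : ∀ h s, IsDist (π h s)) :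
    ∑ h ∈ Finset.range H, ∑ s, ∑ a, occ d0 π P h s a *
        (∑ s', |P h s a s' - Phat h s a s'|)
      ≤ (2 * (H : ℝ) + 1) *
        ∑ h ∈ Finset.range H, ∑ s, ∑ a, occ d0 π Phat h s a *
          (∑ s', |P h s a s' - Phat h s a s'|) := by
  change ∑ h ∈ range H, ∑ s, ∑ a, occ d0 π P h s a * tvDist (P h s a) (Phat h s a)
    ≤ (2 * (H : ℝ) + 1) * ∑ h ∈ range H, modelError d0 π P Phat h
  have hE := modelError_nonneg (P := P) hd0.1 (fun h s => (hπ h s).1)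
    fun h s a => (hPhat h s a).1
  calc _ ≤ ∑ h ∈ range H, (modelError d0 π P Phat h
          + 2 * ∑ g ∈ range h, modelError d0 π P Phat g) :=
        sum_le_sum fun h _ => sum_occ_mul_tvDist_le hd0.1 hπ hP hPhat h
    _ ≤ (2 * (H : ℝ) + 1) * ∑ h ∈ range H, modelError d0 π P Phat h := by
        rw [sum_add_distrib, ← mul_sum]
        linarith [sum_range_sum_range_le hE H]
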